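/- Let 3 ≤ m ≤ n − 1 (i.e., 1 < m − 1 ≤ n − 2) and let B ⊆ [n]∖[m] with |B| = 1. Set D = {x ∈ 𝔽₂ⁿ : supp(x) is not a down-closed subset of ℍ(m,n) contained in [m] ∪ B}. Then the code C_D is a binary Griesmer code with parameters [2ⁿ − 1 − 2^m, n, 2^{n−1} − 1 − 2^{m−1}]: its length is |D| = 2ⁿ − 1 − 2^m; the map u ↦ c_{D,u} is injective (so C_D has 2ⁿ codewords and dimension n); the minimum weight of a nonzero codeword is d = 2^{n−1} − 1 − 2^{m−1}; and Σ_{i=0}^{n−1} ⌈d/2^i⌉ = 2ⁿ − 1 − 2^m, i.e., the Griesmer bound is met with equality. -/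

import Mathlib

open Finset

/-- The order relation of the hierarchical poset `ℍ(m,n)` on `Fin n`:
`i ⪯ j` iff `i = j`, or `i` lies in the bottom level `[m]` and `j` in the top level. -/
def Hle (n m : ℕ) (i j : Fin n) : Prop :=
  i = j ∨ ((i : ℕ) < m ∧ m ≤ (j : ℕ))

instance (n m : ℕ) : DecidableRel (Hle n m) := fun i j =>
  decidable_of_iff (i = j ∨ ((i : ℕ) < m ∧ m ≤ (j : ℕ))) Iff.rfl

/-- Down-closed subsets of the hierarchical poset `ℍ(m,n)`. -/
def HDownClosed (n m : ℕ) (S : Finset (Fin n)) : Prop :=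
  ∀ i j : Fin n, Hle n m i j → j ∈ S → i ∈ S

instance (n m : ℕ) : DecidablePred (HDownClosed n m) := fun S =>
  decidable_of_iff (∀ i j : Fin n, Hle n m i j → j ∈ S → i ∈ S) Iff.rfl

/-- The bottom level `[m]` of `ℍ(m,n)`, viewed inside `Fin n`. -/
def lowSet (n m : ℕ) : Finset (Fin n) :=
  Finset.univ.filter (fun i => (i : ℕ) < m)

/-- The support of a vector of `𝔽₂ⁿ`, as a subset of `[n]`. -/
def supp {n : ℕ} (x : Fin n → ZMod 2) : Finset (Fin n) :=
  Finset.univ.filter (fun i => x i ≠ 0)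

/-- The standard inner product on `𝔽₂ⁿ`. -/
def ip {n : ℕ} (u x : Fin n → ZMod 2) : ZMod 2 := ∑ i, u i * x i

/-- The Hamming weight of the codeword `c_{D,u} = (u·x)_{x ∈ D}`. -/
def wtD {n : ℕ} (D : Finset (Fin n → ZMod 2)) (u : Fin n → ZMod 2) : ℕ :=
  (D.filter (fun x => ip u x = 1)).card

/-- The Hamming weight of the codeword `c_f(s,u) = (s·f(x) + u·x)_{x ∈ 𝔽₂ⁿ ∖ {0}}`. -/
def wtF {n : ℕ} (f : (Fin n → ZMod 2) → ZMod 2) (s : ZMod 2) (u : Fin n → ZMod 2) : ℕ :=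
  (Finset.univ.filter (fun x : Fin n → ZMod 2 => x ≠ 0 ∧ s * f x + ip u x = 1)).card

/-- The Hamming weight of the first `m` coordinates of `u` (the part `v` of `u = (v,w)`). -/
def wtLow (n m : ℕ) (u : Fin n → ZMod 2) : ℕ :=
  (Finset.univ.filter (fun i : Fin n => (i : ℕ) < m ∧ u i ≠ 0)).card

/-! The vectors outside `D` are those whose support is an ideal of `ℍ(m,n)` inside `[m] ∪ {b}`:
since an ideal containing `b` contains all of `[m]`, these are the vectors supported in `[m]`
together with the indicator of `[m] ∪ {b}`. So `|D| = 2ⁿ - 2^m - 1`, and for `u ≠ 0` the weight of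
`c_{D,u}` is `2^{n-1}` minus the number of those vectors with `u · x = 1`. A linear form that is
nonzero on the vectors supported in `[m]` is `1` on exactly half of them, so that number is at most
`2^{m-1} + 1`, with equality for `u = e₁`. The resulting minimum weight is positive, which gives
injectivity. In the Griesmer sum, `⌈d/2^i⌉ = 2^{n-1-i} - 2^{m-1-i}` for `1 ≤ i < m` and
`2^{n-1-i}` for `m ≤ i < n`, and the rest is a geometric series. -/

section Supports

variable {n : ℕ}

lemma ZMod.eq_one_of_ne_zero {a : ZMod 2} (ha : a ≠ 0) : a = 1 := by
  revert a; decide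

lemma supp_subset_iff {x : Fin n → ZMod 2} {s : Finset (Fin n)} :
    supp x ⊆ s ↔ ∀ i ∉ s, x i = 0 := by
  simp only [supp, subset_iff, mem_filter, mem_univ, true_and]
  exact forall_congr' fun i => not_imp_comm

def suppEquiv (n : ℕ) : (Fin n → ZMod 2) ≃ Finset (Fin n) where
  toFun := supp
  invFun S i := if i ∈ S then 1 else 0
  left_inv x := by
    funext i
    by_cases hx : x i = 0
    · simp [supp, hx]
    · simp [supp, ZMod.eq_one_of_ne_zero hx]
  right_inv S := by ext i; simp [supp]

@[simp]
lemma supp_suppEquiv_symm (S : Finset (Fin n)) : supp ((suppEquiv n).symm S) = S :=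
  (suppEquiv n).apply_symm_apply S

lemma card_filter_supp (p : Finset (Fin n) → Prop) [DecidablePred p] :
    #{x : Fin n → ZMod 2 | p (supp x)} = #{S : Finset (Fin n) | p S} :=
  card_equiv (suppEquiv n) (by simp [suppEquiv])

lemma card_filter_supp_subset (s : Finset (Fin n)) :
    #{x : Fin n → ZMod 2 | supp x ⊆ s} = 2 ^ #s := by
  rw [card_filter_supp (· ⊆ s), filter_subset_univ, card_powerset]

end Supports

section Weights

variable {n : ℕ}

lemma ip_eq_dotProduct (u x : Fin n → ZMod 2) : ip u x = u ⬝ᵥ x := rfl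

lemma wtD_zero (D : Finset (Fin n → ZMod 2)) : wtD D 0 = 0 := by
  simp [wtD, ip]

lemma wtD_filter_add_wtD_filter_not (D : Finset (Fin n → ZMod 2)) (p : (Fin n → ZMod 2) → Prop)
    [DecidablePred p] (u : Fin n → ZMod 2) :
    wtD (D.filter p) u + wtD (D.filter (¬ p ·)) u = wtD D u := by
  rw [wtD, wtD, wtD, filter_comm, filter_comm (¬ p ·)]
  exact card_filter_add_card_filter_not p

lemma wtD_insert_le (D : Finset (Fin n → ZMod 2)) (x u : Fin n → ZMod 2) :
    wtD (insert x D) u ≤ wtD D u + 1 := by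
  rw [wtD, wtD, filter_insert]
  split_ifs
  · exact card_insert_le _ _
  · omega

lemma wtD_insert_of_notMem {D : Finset (Fin n → ZMod 2)} {x u : Fin n → ZMod 2} (hx : x ∉ D)
    (hu : ip u x = 1) : wtD (insert x D) u = wtD D u + 1 := by
  rw [wtD, wtD, filter_insert, if_pos hu, card_insert_of_notMem (by simp [hx])]

lemma eq_of_forall_ip_eq {D : Finset (Fin n → ZMod 2)} (hD : ∀ u ≠ 0, wtD D u ≠ 0)
    {u₁ u₂ : Fin n → ZMod 2} (h : ∀ x ∈ D, ip u₁ x = ip u₂ x) : u₁ = u₂ := by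
  by_contra hne
  refine hD (u₁ - u₂) (sub_ne_zero.mpr hne) (card_eq_zero.mpr (filter_eq_empty_iff.mpr ?_))
  intro x hx
  rw [ip_eq_dotProduct, sub_dotProduct, ← ip_eq_dotProduct, ← ip_eq_dotProduct, h x hx, sub_self]
  exact zero_ne_one

/-- Translation by a vector `e` with `u · e = 1` swaps the two halves of `D`. -/
lemma two_mul_wtD_of_add_mem {D : Finset (Fin n → ZMod 2)} {u e : Fin n → ZMod 2}
    (hD : ∀ x ∈ D, x + e ∈ D) (he : ip u e = 1) : 2 * wtD D u = #D := by
  have hip : ∀ x, ip u (x + e) = ip u x + 1 := fun x => by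
    rw [ip_eq_dotProduct, dotProduct_add, ← ip_eq_dotProduct, ← ip_eq_dotProduct, he]
  have hinv : ∀ x : Fin n → ZMod 2, x + e + e = x := fun x => by
    rw [add_assoc, show e + e = 0 from funext fun j => CharTwo.add_self_eq_zero (e j), add_zero]
  have hswap : wtD D u = #{x ∈ D | ¬ ip u x = 1} := by
    refine card_nbij' (· + e) (· + e) ?_ ?_ (fun x _ => hinv x) (fun x _ => hinv x) <;>
    · intro x hx
      simp only [coe_filter, Set.mem_ofPred_eq] at hx ⊢
      obtain ⟨hxD, hxu⟩ := hx
      refine ⟨hD x hxD, ?_⟩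
      rw [hip]
      revert hxu
      generalize ip u x = a
      revert a
      decide
  rw [two_mul]
  nth_rw 2 [hswap]
  exact card_filter_add_card_filter_not _

lemma two_mul_wtD_filter_supp_subset {s : Finset (Fin n)} {u : Fin n → ZMod 2} {i : Fin n}
    (hi : i ∈ s) (hu : u i ≠ 0) : 2 * wtD {x | supp x ⊆ s} u = 2 ^ #s := by
  rw [two_mul_wtD_of_add_mem (e := Pi.single i 1), card_filter_supp_subset]
  · intro x hx
    simp only [mem_filter, mem_univ, true_and, supp_subset_iff] at hx ⊢
    intro j hj
    rw [Pi.add_apply, hx j hj, Pi.single_eq_of_ne (ne_of_mem_of_not_mem hi hj).symm, add_zero]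
  · rw [ip_eq_dotProduct, dotProduct_single, mul_one, ZMod.eq_one_of_ne_zero hu]

lemma wtD_filter_supp_subset_eq_zero {s : Finset (Fin n)} {u : Fin n → ZMod 2}
    (hu : ∀ i ∈ s, u i = 0) : wtD {x | supp x ⊆ s} u = 0 := by
  refine card_eq_zero.mpr (filter_eq_empty_iff.mpr fun x hx => ?_)
  have hx : ∀ i ∉ s, x i = 0 := supp_subset_iff.mp (mem_filter.mp hx).2
  rw [ip, sum_eq_zero fun i _ => ?_]
  · exact zero_ne_one
  · by_cases hi : i ∈ s <;> simp [hi, hu, hx]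

lemma two_mul_wtD_filter_supp_subset_le (s : Finset (Fin n)) (u : Fin n → ZMod 2) :
    2 * wtD {x | supp x ⊆ s} u ≤ 2 ^ #s := by
  by_cases h : ∃ i ∈ s, u i ≠ 0
  · obtain ⟨i, hi, hu⟩ := h
    exact (two_mul_wtD_filter_supp_subset hi hu).le
  · push Not at h
    rw [wtD_filter_supp_subset_eq_zero h]
    positivity

lemma two_mul_wtD_univ {u : Fin n → ZMod 2} (hu : u ≠ 0) : 2 * wtD univ u = 2 ^ n := by
  obtain ⟨i, hi⟩ := Function.ne_iff.mp hu
  simpa using two_mul_wtD_filter_supp_subset (mem_univ i) hi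

end Weights

section Hierarchical

variable {n m : ℕ}

lemma mem_lowSet {i : Fin n} : i ∈ lowSet n m ↔ (i : ℕ) < m := by
  simp [lowSet]

lemma card_lowSet (h : m ≤ n) : #(lowSet n m) = m := by
  rw [lowSet, Fin.card_filter_val_lt, min_eq_right h]

lemma hDownClosed_and_subset_iff {b : Fin n} (hb : m ≤ b) (S : Finset (Fin n)) :
    HDownClosed n m S ∧ S ⊆ lowSet n m ∪ {b} ↔ S ⊆ lowSet n m ∨ S = lowSet n m ∪ {b} := by
  constructor
  · rintro ⟨hS, hSb⟩
    by_cases hbS : b ∈ S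
    · refine Or.inr (subset_antisymm hSb (union_subset (fun i hi => ?_) (by simpa using hbS)))
      exact hS i b (Or.inr ⟨mem_lowSet.1 hi, hb⟩) hbS
    · refine Or.inl fun i hi => (mem_union.1 (hSb hi)).resolve_right fun h => ?_
      exact hbS (mem_singleton.1 h ▸ hi)
  · rintro (hS | rfl)
    · refine ⟨fun i j hij hj => ?_, hS.trans subset_union_left⟩
      rcases hij with rfl | ⟨-, hj'⟩
      · exact hj
      · exact absurd (mem_lowSet.1 (hS hj)) (not_lt.2 hj')
    · refine ⟨fun i j hij hj => ?_, subset_rfl⟩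
      rcases hij with rfl | ⟨hi, -⟩
      · exact hj
      · exact subset_union_left (mem_lowSet.2 hi)

lemma symm_suppEquiv_notMem_filter_supp_subset {b : Fin n} (hb : m ≤ b) :
    (suppEquiv n).symm (lowSet n m ∪ {b}) ∉ ({x | supp x ⊆ lowSet n m} : Finset _) := by
  have hbL : b ∉ lowSet n m := fun h => absurd (mem_lowSet.1 h) (not_lt.2 hb)
  simpa [insert_subset_iff] using hbL

lemma filter_supp_hDownClosed_and_subset {b : Fin n} (hb : m ≤ b) :
    univ.filter (fun x : Fin n → ZMod 2 => HDownClosed n m (supp x) ∧ supp x ⊆ lowSet n m ∪ {b}) =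
      insert ((suppEquiv n).symm (lowSet n m ∪ {b})) (univ.filter fun x => supp x ⊆ lowSet n m) := by
  ext x
  rw [mem_insert, mem_filter, mem_filter, hDownClosed_and_subset_iff hb, Equiv.eq_symm_apply]
  simp only [mem_univ, true_and]
  exact or_comm

end Hierarchical

lemma sum_range_two_pow_sub_add_one (k : ℕ) : ∑ i ∈ range k, 2 ^ (k - 1 - i) + 1 = 2 ^ k := by
  rw [sum_range_reflect (2 ^ ·) k]
  simpa [one_add_one_eq_two] using geom_sum_mul_add (1 : ℕ) k

-- The terms `⌈d/2^{i+1}⌉` of the Griesmer sum, written with `n = k + 1` and `m = l + 1`.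
lemma ceil_div_two_pow_succ_add_of_lt {k l i : ℕ} (hil : i < l) (hlk : l < k) :
    (2 ^ k - 1 - 2 ^ l + 2 ^ (i + 1) - 1) / 2 ^ (i + 1) + 2 ^ (l - 1 - i) = 2 ^ (k - 1 - i) := by
  have hk : 2 ^ k = 2 ^ (i + 1) * 2 ^ (k - 1 - i) := by rw [← pow_add]; congr 1; omega
  have hl : 2 ^ l = 2 ^ (i + 1) * 2 ^ (l - 1 - i) := by rw [← pow_add]; congr 1; omega
  have hlt : 2 ^ l < 2 ^ k := Nat.pow_lt_pow_right one_lt_two hlk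
  have hab : 2 ^ (l - 1 - i) ≤ 2 ^ (k - 1 - i) := Nat.pow_le_pow_right two_pos (by omega)
  have hP : 2 ≤ 2 ^ (i + 1) := Nat.le_self_pow (by omega) 2
  have hsub := Nat.mul_sub (2 ^ (i + 1)) (2 ^ (k - 1 - i)) (2 ^ (l - 1 - i))
  have hnum : 2 ^ k - 1 - 2 ^ l + 2 ^ (i + 1) - 1
      = 2 ^ (i + 1) * (2 ^ (k - 1 - i) - 2 ^ (l - 1 - i)) + (2 ^ (i + 1) - 2) := by
    omega
  rw [hnum, Nat.mul_add_div (by positivity), Nat.div_eq_of_lt (by omega)]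
  omega

lemma ceil_div_two_pow_succ_of_le {k l i : ℕ} (hl : 1 ≤ l) (hli : l ≤ i) (hik : i < k) :
    (2 ^ k - 1 - 2 ^ l + 2 ^ (i + 1) - 1) / 2 ^ (i + 1) = 2 ^ (k - 1 - i) := by
  have hk : 2 ^ k = 2 ^ (i + 1) * 2 ^ (k - 1 - i) := by rw [← pow_add]; congr 1; omega
  have hlt : 2 ^ l < 2 ^ k := Nat.pow_lt_pow_right one_lt_two (by omega)
  have hP : 2 ^ l + 2 ≤ 2 ^ (i + 1) := by
    have : 2 * 2 ^ l ≤ 2 ^ (i + 1) := by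
      rw [← pow_succ']; exact Nat.pow_le_pow_right two_pos (by omega)
    have : 2 ≤ 2 ^ l := Nat.le_self_pow (by omega) 2
    omega
  have hnum : 2 ^ k - 1 - 2 ^ l + 2 ^ (i + 1) - 1
      = 2 ^ (i + 1) * 2 ^ (k - 1 - i) + (2 ^ (i + 1) - 2 ^ l - 2) := by
    rw [hk] at hlt ⊢
    generalize 2 ^ (i + 1) * 2 ^ (k - 1 - i) = N at hlt ⊢
    omega
  rw [hnum, Nat.mul_add_div (by positivity), Nat.div_eq_of_lt (by rw [Nat.sub_sub]; exact Nat.sub_lt (by positivity) (by positivity)),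
    add_zero]

theorem griesmer_sum_eq {n m : ℕ} (hm : 2 ≤ m) (hmn : m < n) :
    ∑ i ∈ range n, (2 ^ (n - 1) - 1 - 2 ^ (m - 1) + 2 ^ i - 1) / 2 ^ i = 2 ^ n - 1 - 2 ^ m := by
  obtain ⟨k, rfl⟩ : ∃ k, n = k + 1 := ⟨n - 1, by omega⟩
  obtain ⟨l, rfl⟩ : ∃ l, m = l + 1 := ⟨m - 1, by omega⟩
  simp only [Nat.add_sub_cancel]
  set f : ℕ → ℕ := fun i => (2 ^ k - 1 - 2 ^ l + 2 ^ i - 1) / 2 ^ i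
  have hlk : l ≤ k := by omega
  have hlow : ∑ i ∈ range l, (f (i + 1) + 2 ^ (l - 1 - i)) = ∑ i ∈ range l, 2 ^ (k - 1 - i) :=
    sum_congr rfl fun i hi => ceil_div_two_pow_succ_add_of_lt (mem_range.1 hi) (by omega)
  have hhigh : ∑ i ∈ Ico l k, f (i + 1) = ∑ i ∈ Ico l k, 2 ^ (k - 1 - i) :=
    sum_congr rfl fun i hi => ceil_div_two_pow_succ_of_le (by omega) (mem_Ico.1 hi).1 (mem_Ico.1 hi).2
  rw [sum_add_distrib] at hlow
  have hk := sum_range_two_pow_sub_add_one k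
  have hl := sum_range_two_pow_sub_add_one l
  rw [← sum_range_add_sum_Ico _ hlk] at hk
  have htail : ∑ i ∈ range k, f (i + 1) + 2 ^ l = 2 ^ k := by
    rw [← sum_range_add_sum_Ico _ hlk]
    omega
  have hf0 : f 0 = 2 ^ k - 1 - 2 ^ l := by simp [f]
  have hlt : 2 ^ l < 2 ^ k := Nat.pow_lt_pow_right one_lt_two (by omega)
  change ∑ i ∈ range (k + 1), f i = _
  rw [sum_range_succ', hf0, pow_succ, pow_succ]
  omega

section IdealComplementCode

variable {n m : ℕ} {b : Fin n}

lemma card_filter_not_hDownClosed_and_subset (hb : m ≤ b) (hmn : m < n) :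
    #(univ.filter fun x : Fin n → ZMod 2 =>
      ¬ (HDownClosed n m (supp x) ∧ supp x ⊆ lowSet n m ∪ {b})) = 2 ^ n - 1 - 2 ^ m := by
  have hsplit := card_filter_add_card_filter_not (s := (univ : Finset (Fin n → ZMod 2)))
    fun x => HDownClosed n m (supp x) ∧ supp x ⊆ lowSet n m ∪ {b}
  rw [filter_supp_hDownClosed_and_subset hb,
    card_insert_of_notMem (symm_suppEquiv_notMem_filter_supp_subset hb), card_filter_supp_subset,
    card_lowSet hmn.le, card_univ, Fintype.card_fun, ZMod.card, Fintype.card_fin] at hsplit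
  have := Nat.pow_lt_pow_right one_lt_two hmn
  omega

lemma le_wtD_filter_not_hDownClosed_and_subset (hb : m ≤ b) (hmn : m < n) (hm : 1 ≤ m)
    {u : Fin n → ZMod 2} (hu : u ≠ 0) :
    2 ^ (n - 1) - 1 - 2 ^ (m - 1) ≤ wtD (univ.filter fun x : Fin n → ZMod 2 =>
      ¬ (HDownClosed n m (supp x) ∧ supp x ⊆ lowSet n m ∪ {b})) u := by
  have hsplit := wtD_filter_add_wtD_filter_not univ
    (fun x => HDownClosed n m (supp x) ∧ supp x ⊆ lowSet n m ∪ {b}) u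
  rw [filter_supp_hDownClosed_and_subset hb] at hsplit
  have hideal := wtD_insert_le (univ.filter fun x => supp x ⊆ lowSet n m)
    ((suppEquiv n).symm (lowSet n m ∪ {b})) u
  have hlow := two_mul_wtD_filter_supp_subset_le (lowSet n m) u
  have hall := two_mul_wtD_univ hu
  rw [card_lowSet hmn.le] at hlow
  rw [← Nat.two_pow_pred_mul_two (by omega : 0 < n)] at hall
  rw [← Nat.two_pow_pred_mul_two (by omega : 0 < m)] at hlow
  omega

lemma wtD_filter_not_hDownClosed_and_subset_single (hb : m ≤ b) (hmn : m < n) (hm : 1 ≤ m) :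
    wtD (univ.filter fun x : Fin n → ZMod 2 =>
      ¬ (HDownClosed n m (supp x) ∧ supp x ⊆ lowSet n m ∪ {b})) (Pi.single ⟨0, by omega⟩ 1)
      = 2 ^ (n - 1) - 1 - 2 ^ (m - 1) := by
  set i₀ : Fin n := ⟨0, by omega⟩
  have hi₀ : i₀ ∈ lowSet n m := mem_lowSet.2 hm
  have hsplit := wtD_filter_add_wtD_filter_not univ
    (fun x => HDownClosed n m (supp x) ∧ supp x ⊆ lowSet n m ∪ {b}) (Pi.single i₀ 1)
  have hip : ip (Pi.single i₀ 1) ((suppEquiv n).symm (lowSet n m ∪ {b})) = 1 := by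
    simp [ip_eq_dotProduct, suppEquiv, hi₀]
  rw [filter_supp_hDownClosed_and_subset hb,
    wtD_insert_of_notMem (symm_suppEquiv_notMem_filter_supp_subset hb) hip] at hsplit
  have hlow := two_mul_wtD_filter_supp_subset hi₀ (u := Pi.single i₀ 1) (by simp)
  have hall := two_mul_wtD_univ (n := n) (u := Pi.single i₀ 1) (by simp)
  rw [card_lowSet hmn.le, ← Nat.two_pow_pred_mul_two (by omega : 0 < m)] at hlow
  rw [← Nat.two_pow_pred_mul_two (by omega : 0 < n)] at hall
  omega

end IdealComplementCode

/-- **Theorem 6.1(1).**  For `3 ≤ m ≤ n−1` and `B ⊆ [n]∖[m]` with `|B| = 1`, the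
code `C_D` built from the ideal `[m] ∪ B` of `ℍ(m,n)` is a Griesmer code with
parameters `[2ⁿ − 1 − 2^m, n, 2^{n−1} − 1 − 2^{m−1}]`: the length is
`|D| = 2ⁿ − 1 − 2^m`, the map `u ↦ c_{D,u}` is injective (dimension `n`), the
minimum nonzero codeword weight is `d = 2^{n−1} − 1 − 2^{m−1}`, and
`Σ_{i=0}^{n−1} ⌈d/2ⁱ⌉ = 2ⁿ − 1 − 2^m`. -/
theorem stmt_12 (n m : ℕ) (hm : 3 ≤ m) (hmn : m < n)
    (B : Finset (Fin n)) (hB : ∀ j ∈ B, m ≤ (j : ℕ)) (hBcard : B.card = 1)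
    (D : Finset (Fin n → ZMod 2))
    (hD : D = Finset.univ.filter (fun x =>
      ¬ (HDownClosed n m (supp x) ∧ supp x ⊆ lowSet n m ∪ B))) :
    D.card = 2 ^ n - 1 - 2 ^ m
    ∧ (∀ u₁ u₂ : Fin n → ZMod 2, (∀ x ∈ D, ip u₁ x = ip u₂ x) → u₁ = u₂)
    ∧ (∀ u : Fin n → ZMod 2, wtD D u ≠ 0 → 2 ^ (n - 1) - 1 - 2 ^ (m - 1) ≤ wtD D u)
    ∧ (∃ u : Fin n → ZMod 2, wtD D u = 2 ^ (n - 1) - 1 - 2 ^ (m - 1))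
    ∧ ∑ i ∈ Finset.range n, (2 ^ (n - 1) - 1 - 2 ^ (m - 1) + 2 ^ i - 1) / 2 ^ i
        = 2 ^ n - 1 - 2 ^ m := by
  obtain ⟨b, rfl⟩ := card_eq_one.mp hBcard
  have hb : m ≤ (b : ℕ) := hB b (mem_singleton_self b)
  subst hD
  have hmin := fun u (hu : u ≠ 0) => le_wtD_filter_not_hDownClosed_and_subset hb hmn (by omega) hu
  have hd : 0 < 2 ^ (n - 1) - 1 - 2 ^ (m - 1) := by
    have h1 : 2 ^ (m - 1) * 2 ≤ 2 ^ (n - 1) := by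
      rw [← pow_succ]; exact Nat.pow_le_pow_right two_pos (by omega)
    have h2 : 2 ≤ 2 ^ (m - 1) := Nat.le_self_pow (by omega) 2
    omega
  refine ⟨card_filter_not_hDownClosed_and_subset hb hmn,
    fun u₁ u₂ => eq_of_forall_ip_eq fun u hu => (hd.trans_le (hmin u hu)).ne',
    fun u hu => hmin u fun h => hu (h ▸ wtD_zero _),
    ⟨_, wtD_filter_not_hDownClosed_and_subset_single hb hmn (by omega)⟩,
    griesmer_sum_eq (by omega) hmn⟩
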